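/- arXiv:math/0304239 — 12 statements merged into one kernel-verified Lean document; each statement's English description precedes it below -/
import Mathlib

section
/- Let H be an inner product space over 𝕜 (𝕜 = ℝ or ℂ) and let e ∈ H with ‖e‖ = 1. If φ, γ, Φ, Γ ∈ 𝕜 and x, y ∈ H satisfy Re⟨Φe − x, x − φe⟩ ≥ 0 and Re⟨Γe − y, y − γe⟩ ≥ 0, then |⟨x,y⟩ − ⟨x,e⟩⟨e,y⟩| ≤ (1/4)|Φ − φ||Γ − γ|. -/
/-!
Writing `x - φ • e = u + v` and `Φ • e - x = u - v` with `u = ((Φ - φ) / 2) • e`, the hypothesis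
`0 ≤ Re ⟪Φ • e - x, x - φ • e⟫ = ‖u‖² - ‖v‖²` says that `x` lies in the ball of radius `|Φ - φ| / 2`
around `((Φ + φ) / 2) • e`. The component `x - ⟪e, x⟫ • e` of `x` orthogonal to `e` has as norm the
distance from `x` to the line `𝕜 ∙ e`, so it is at most `|Φ - φ| / 2` as well. The left-hand side is
the inner product of the components of `x` and `y` orthogonal to `e`, so Cauchy–Schwarz concludes.
-/

open RCLike

open scoped InnerProductSpace

section

variable {𝕜 E : Type*} [RCLike 𝕜] [NormedAddCommGroup E] [InnerProductSpace 𝕜 E]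

theorem re_inner_sub_add_eq_norm_sq_sub_norm_sq (u v : E) :
    re ⟪u - v, u + v⟫_𝕜 = ‖u‖ ^ 2 - ‖v‖ ^ 2 := by
  rw [inner_sub_left, inner_add_right, inner_add_right, map_sub, map_add, map_add,
    inner_re_symm v u, inner_self_eq_norm_sq, inner_self_eq_norm_sq]
  ring

theorem norm_sub_midpoint_smul_le_of_re_inner_nonneg (e x : E) (φ Φ : 𝕜)
    (h : 0 ≤ re ⟪Φ • e - x, x - φ • e⟫_𝕜) :
    ‖x - ((Φ + φ) / 2) • e‖ ≤ ‖((Φ - φ) / 2) • e‖ := by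
  have hsub : Φ • e - x = ((Φ - φ) / 2) • e - (x - ((Φ + φ) / 2) • e) := by module
  have hadd : x - φ • e = ((Φ - φ) / 2) • e + (x - ((Φ + φ) / 2) • e) := by module
  rw [hsub, hadd, re_inner_sub_add_eq_norm_sq_sub_norm_sq] at h
  exact (sq_le_sq₀ (norm_nonneg _) (norm_nonneg _)).mp (by linarith)

theorem inner_sub_inner_smul_self_eq_zero {e : E} (he : ‖e‖ = 1) (x : E) :
    ⟪x - ⟪e, x⟫_𝕜 • e, e⟫_𝕜 = 0 := by
  rw [inner_sub_left, inner_smul_left, inner_self_eq_one_of_norm_eq_one he, inner_conj_symm,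
    mul_one, sub_self]

theorem norm_sub_inner_smul_le_norm_sub_smul {e : E} (he : ‖e‖ = 1) (x : E) (c : 𝕜) :
    ‖x - ⟪e, x⟫_𝕜 • e‖ ≤ ‖x - c • e‖ := by
  have hdecomp : x - c • e = (x - ⟪e, x⟫_𝕜 • e) + (⟪e, x⟫_𝕜 - c) • e := by module
  have horth : ⟪x - ⟪e, x⟫_𝕜 • e, (⟪e, x⟫_𝕜 - c) • e⟫_𝕜 = 0 := by
    rw [inner_smul_right, inner_sub_inner_smul_self_eq_zero he, mul_zero]
  rw [hdecomp, ← sq_le_sq₀ (norm_nonneg _) (norm_nonneg _),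
    sq, sq, norm_add_sq_eq_norm_sq_add_norm_sq_of_inner_eq_zero _ _ horth]
  exact le_add_of_nonneg_right (mul_self_nonneg _)

theorem inner_sub_inner_smul_sub_inner_smul {e : E} (he : ‖e‖ = 1) (x y : E) :
    ⟪x - ⟪e, x⟫_𝕜 • e, y - ⟪e, y⟫_𝕜 • e⟫_𝕜 = ⟪x, y⟫_𝕜 - ⟪x, e⟫_𝕜 * ⟪e, y⟫_𝕜 := by
  rw [inner_sub_right, inner_smul_right, inner_sub_inner_smul_self_eq_zero he, mul_zero,
    sub_zero, inner_sub_left, inner_smul_left, inner_conj_symm]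

theorem norm_sub_inner_smul_le_of_re_inner_nonneg {e : E} (he : ‖e‖ = 1) (x : E) (φ Φ : 𝕜)
    (h : 0 ≤ re ⟪Φ • e - x, x - φ • e⟫_𝕜) :
    ‖x - ⟪e, x⟫_𝕜 • e‖ ≤ ‖Φ - φ‖ / 2 :=
  calc ‖x - ⟪e, x⟫_𝕜 • e‖ ≤ ‖x - ((Φ + φ) / 2) • e‖ := norm_sub_inner_smul_le_norm_sub_smul he x _
    _ ≤ ‖((Φ - φ) / 2) • e‖ := norm_sub_midpoint_smul_le_of_re_inner_nonneg e x φ Φ h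
    _ = ‖Φ - φ‖ / 2 := by rw [norm_smul, he, mul_one, norm_div, RCLike.norm_two]

end

/-- **Grüss inequality in inner product spaces** (Theorem 1).
If `‖e‖ = 1`, `Re⟨Φe - x, x - φe⟩ ≥ 0` and `Re⟨Γe - y, y - γe⟩ ≥ 0`, then
`|⟨x,y⟩ - ⟨x,e⟩⟨e,y⟩| ≤ (1/4)|Φ - φ||Γ - γ|`. -/
theorem gruss_inner_product {𝕜 H : Type*} [RCLike 𝕜] [NormedAddCommGroup H]
    [InnerProductSpace 𝕜 H] (e x y : H) (he : ‖e‖ = 1) (φ γ Φ Γ : 𝕜)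
    (hx : 0 ≤ RCLike.re (inner 𝕜 (Φ • e - x) (x - φ • e) : 𝕜))
    (hy : 0 ≤ RCLike.re (inner 𝕜 (Γ • e - y) (y - γ • e) : 𝕜)) :
    ‖(inner 𝕜 x y : 𝕜) - (inner 𝕜 x e : 𝕜) * (inner 𝕜 e y : 𝕜)‖ ≤
      (1 / 4 : ℝ) * ‖Φ - φ‖ * ‖Γ - γ‖ :=
  calc ‖⟪x, y⟫_𝕜 - ⟪x, e⟫_𝕜 * ⟪e, y⟫_𝕜‖
      = ‖⟪x - ⟪e, x⟫_𝕜 • e, y - ⟪e, y⟫_𝕜 • e⟫_𝕜‖ := by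
        rw [inner_sub_inner_smul_sub_inner_smul he]
    _ ≤ ‖x - ⟪e, x⟫_𝕜 • e‖ * ‖y - ⟪e, y⟫_𝕜 • e‖ := norm_inner_le_norm _ _
    _ ≤ (‖Φ - φ‖ / 2) * (‖Γ - γ‖ / 2) :=
        mul_le_mul (norm_sub_inner_smul_le_of_re_inner_nonneg he x φ Φ hx)
          (norm_sub_inner_smul_le_of_re_inner_nonneg he y γ Γ hy) (norm_nonneg _) (by positivity)
    _ = (1 / 4 : ℝ) * ‖Φ - φ‖ * ‖Γ - γ‖ := by ring
end

section
/- Let f, g : [a,b] → 𝕜 (𝕜 = ℝ or ℂ) be Lebesgue measurable and square-integrable, and suppose there exist constants φ, γ, Φ, Γ ∈ 𝕜 such that Re[(Φ − f(x))(conj(f(x)) − conj(φ))] ≥ 0 and Re[(Γ − g(x))(conj(g(x)) − conj(γ))] ≥ 0 for almost every x ∈ [a,b]. Then |(1/(b−a))∫ₐᵇ f(x) conj(g(x)) dx − (1/(b−a))∫ₐᵇ f(x) dx · (1/(b−a))∫ₐᵇ conj(g(x)) dx| ≤ (1/4)|Φ − φ||Γ − γ|. -/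
/-!
The condition `0 ≤ Re[(Φ - z)(conj z - conj φ)]` says exactly that `z` lies in the closed disc
with centre `(Φ + φ)/2` and radius `|Φ - φ|/2`. After normalising Lebesgue measure on `[a, b]` to
a probability measure, the left-hand side is the modulus of the covariance
`E[(f - E f)(conj g - E conj g)]`. Cauchy–Schwarz bounds it by the product of the two standard
deviations, and the variance of a function with values in a disc of radius `r` is at most its
second moment about the centre, hence at most `r²`.
-/

open MeasureTheory ComplexConjugate

namespace RCLike

variable {𝕜 : Type*} [RCLike 𝕜]

lemma re_sub_mul_conj_add (r w : 𝕜) :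
    re ((r - w) * conj (r + w)) = ‖r‖ ^ 2 - ‖w‖ ^ 2 := by
  simp only [norm_sq_eq_def, mul_re, map_add, map_sub, conj_re, conj_im]
  ring

lemma re_sub_mul_conj_sub_eq (Φ φ z : 𝕜) :
    re ((Φ - z) * (conj z - conj φ)) = ‖(Φ - φ) / 2‖ ^ 2 - ‖z - (Φ + φ) / 2‖ ^ 2 := by
  rw [← re_sub_mul_conj_add, ← map_sub]
  ring_nf

lemma norm_sub_midpoint_le_of_re_nonneg {Φ φ z : 𝕜}
    (h : 0 ≤ re ((Φ - z) * (conj z - conj φ))) :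
    ‖z - (Φ + φ) / 2‖ ≤ ‖Φ - φ‖ / 2 := by
  rw [re_sub_mul_conj_sub_eq, sub_nonneg, norm_div, RCLike.norm_two] at h
  exact (pow_le_pow_iff_left₀ (norm_nonneg _) (by positivity) two_ne_zero).1 h

end RCLike

section

variable {Ω 𝕜 : Type*} [MeasurableSpace Ω] {μ : Measure Ω} [RCLike 𝕜] {f g : Ω → 𝕜}

lemma norm_integral_mul_le_sqrt_mul_sqrt (hf : MemLp f 2 μ) (hg : MemLp g 2 μ) :
    ‖∫ x, f x * g x ∂μ‖ ≤ √(∫ x, ‖f x‖ ^ 2 ∂μ) * √(∫ x, ‖g x‖ ^ 2 ∂μ) := by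
  have holder := integral_mul_norm_le_Lp_mul_Lq (μ := μ) .two_two
    (by simpa using hf) (by simpa using hg)
  simp only [Real.rpow_two, ← Real.sqrt_eq_rpow] at holder
  calc ‖∫ x, f x * g x ∂μ‖ ≤ ∫ x, ‖f x‖ * ‖g x‖ ∂μ := by
        simpa only [norm_mul] using norm_integral_le_integral_norm (fun x => f x * g x)
    _ ≤ _ := holder

variable [IsProbabilityMeasure μ]

lemma integral_sub_integral_eq_zero (hf : Integrable f μ) :
    ∫ x, (f x - ∫ y, f y ∂μ) ∂μ = 0 := by
  simp [integral_sub hf (integrable_const _)]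

lemma integral_sub_integral_mul_sub_integral (hf : MemLp f 2 μ) (hg : MemLp g 2 μ) :
    ∫ x, (f x - ∫ y, f y ∂μ) * (g x - ∫ y, g y ∂μ) ∂μ
      = ∫ x, f x * g x ∂μ - (∫ x, f x ∂μ) * ∫ x, g x ∂μ := by
  set I := ∫ y, f y ∂μ
  have hfi := hf.integrable one_le_two
  have hfg : Integrable (fun x => f x * g x) μ := hf.integrable_mul hg
  have hFg : Integrable (fun x => (f x - I) * g x) μ :=
    (hf.sub (memLp_const I)).integrable_mul hg
  have hFJ : Integrable (fun x => (f x - I) * ∫ y, g y ∂μ) μ :=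
    (hfi.sub (integrable_const I)).mul_const _
  calc ∫ x, (f x - I) * (g x - ∫ y, g y ∂μ) ∂μ
      = ∫ x, (f x - I) * g x ∂μ - (∫ x, (f x - I) ∂μ) * ∫ y, g y ∂μ := by
        rw [← integral_mul_const, ← integral_sub hFg hFJ]
        simp_rw [mul_sub]
    _ = _ := by
        rw [integral_sub_integral_eq_zero hfi, zero_mul, sub_zero]
        simp_rw [sub_mul]
        rw [integral_sub hfg ((hg.integrable one_le_two).const_mul I), integral_const_mul]

lemma integral_norm_sub_sq_eq (hf : MemLp f 2 μ) (m : 𝕜) :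
    ∫ x, ‖f x - m‖ ^ 2 ∂μ
      = ∫ x, ‖f x - ∫ y, f y ∂μ‖ ^ 2 ∂μ + ‖(∫ y, f y ∂μ) - m‖ ^ 2 := by
  set I := ∫ y, f y ∂μ
  have hF : MemLp (fun x => f x - I) 2 μ := hf.sub (memLp_const I)
  have hF2 : Integrable (fun x => ‖f x - I‖ ^ 2) μ := hF.norm.integrable_sq
  have hFc : Integrable (fun x => (f x - I) * conj (I - m)) μ :=
    (hF.integrable one_le_two).mul_const _
  have hcross : Integrable (fun x => 2 * RCLike.re ((f x - I) * conj (I - m))) μ :=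
    hFc.re.const_mul 2
  have hcross₀ : ∫ x, 2 * RCLike.re ((f x - I) * conj (I - m)) ∂μ = 0 := by
    rw [integral_const_mul, integral_re hFc, integral_mul_const,
      integral_sub_integral_eq_zero (hf.integrable one_le_two)]
    simp
  calc ∫ x, ‖f x - m‖ ^ 2 ∂μ
      = ∫ x, (‖f x - I‖ ^ 2 + 2 * RCLike.re ((f x - I) * conj (I - m)) + ‖I - m‖ ^ 2) ∂μ := by
        congr 1 with x
        rw [← sub_add_sub_cancel (f x) I m, norm_add_sq (𝕜 := 𝕜), inner_re_symm,
          RCLike.inner_apply, mul_comm]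
    _ = _ := by
        rw [integral_add ?_ (integrable_const _), integral_add hF2 hcross, hcross₀]
        · simp
        · exact hF2.add hcross

lemma sqrt_integral_norm_sub_integral_sq_le (hf : MemLp f 2 μ) {m : 𝕜} {C : ℝ}
    (hC : ∀ᵐ x ∂μ, ‖f x - m‖ ≤ C) :
    √(∫ x, ‖f x - ∫ y, f y ∂μ‖ ^ 2 ∂μ) ≤ C := by
  obtain ⟨x, hx⟩ := hC.exists
  have hsecond : ∫ x, ‖f x - m‖ ^ 2 ∂μ ≤ C ^ 2 := by
    simpa using integral_mono_ae (hf.sub (memLp_const m)).norm.integrable_sq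
      (integrable_const _) (hC.mono fun x hx => pow_le_pow_left₀ (norm_nonneg _) hx 2)
  rw [Real.sqrt_le_left ((norm_nonneg _).trans hx)]
  nlinarith [integral_norm_sub_sq_eq hf m, norm_nonneg ((∫ y, f y ∂μ) - m)]

theorem norm_integral_mul_sub_mul_le (hf : MemLp f 2 μ) (hg : MemLp g 2 μ) {mf mg : 𝕜}
    {Cf Cg : ℝ} (hCf : ∀ᵐ x ∂μ, ‖f x - mf‖ ≤ Cf) (hCg : ∀ᵐ x ∂μ, ‖g x - mg‖ ≤ Cg) :
    ‖∫ x, f x * g x ∂μ - (∫ x, f x ∂μ) * ∫ x, g x ∂μ‖ ≤ Cf * Cg := by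
  have hσf := sqrt_integral_norm_sub_integral_sq_le hf hCf
  have hσg := sqrt_integral_norm_sub_integral_sq_le hg hCg
  rw [← integral_sub_integral_mul_sub_integral hf hg]
  exact (norm_integral_mul_le_sqrt_mul_sqrt (hf.sub (memLp_const _))
    (hg.sub (memLp_const _))).trans
    (mul_le_mul hσf hσg (Real.sqrt_nonneg _) ((Real.sqrt_nonneg _).trans hσf))

end

theorem norm_average_mul_sub_mul_le {Ω 𝕜 : Type*} [MeasurableSpace Ω] {μ : Measure Ω}
    [IsFiniteMeasure μ] [NeZero μ] [RCLike 𝕜] {f g : Ω → 𝕜}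
    (hf : MemLp f 2 μ) (hg : MemLp g 2 μ) {mf mg : 𝕜} {Cf Cg : ℝ}
    (hCf : ∀ᵐ x ∂μ, ‖f x - mf‖ ≤ Cf) (hCg : ∀ᵐ x ∂μ, ‖g x - mg‖ ≤ Cg) :
    ‖⨍ x, f x * g x ∂μ - (⨍ x, f x ∂μ) * ⨍ x, g x ∂μ‖ ≤ Cf * Cg := by
  have hc : (μ Set.univ)⁻¹ ≠ ⊤ := by simp [NeZero.ne μ]
  simpa only [average_eq'] using norm_integral_mul_sub_mul_le (hf.smul_measure hc)
    (hg.smul_measure hc) (Measure.ae_smul_measure hCf _) (Measure.ae_smul_measure hCg _)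

/-- **Grüss inequality for integrals** (Corollary 1). -/
theorem gruss_integral_interval {𝕜 : Type*} [RCLike 𝕜] (a b : ℝ) (hab : a < b)
    (f g : ℝ → 𝕜)
    (hf : MemLp f 2 (volume.restrict (Set.Icc a b)))
    (hg : MemLp g 2 (volume.restrict (Set.Icc a b)))
    (φ γ Φ Γ : 𝕜)
    (hfb : ∀ᵐ x ∂(volume.restrict (Set.Icc a b)),
      0 ≤ RCLike.re ((Φ - f x) * (starRingEnd 𝕜 (f x) - starRingEnd 𝕜 φ)))
    (hgb : ∀ᵐ x ∂(volume.restrict (Set.Icc a b)),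
      0 ≤ RCLike.re ((Γ - g x) * (starRingEnd 𝕜 (g x) - starRingEnd 𝕜 γ))) :
    ‖((1 / (b - a)) • ∫ x in Set.Icc a b, f x * starRingEnd 𝕜 (g x)) -
        ((1 / (b - a)) • ∫ x in Set.Icc a b, f x) *
          ((1 / (b - a)) • ∫ x in Set.Icc a b, starRingEnd 𝕜 (g x))‖ ≤
      (1 / 4 : ℝ) * ‖Φ - φ‖ * ‖Γ - γ‖ := by
  have : NeZero (volume.restrict (Set.Icc a b)) := ⟨by simp [hab]⟩
  have hf_disc := hfb.mono fun x => RCLike.norm_sub_midpoint_le_of_re_nonneg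
  have hg_disc : ∀ᵐ x ∂(volume.restrict (Set.Icc a b)),
      ‖conj (g x) - conj ((Γ + γ) / 2)‖ ≤ ‖Γ - γ‖ / 2 := by
    filter_upwards [hgb] with x hx
    rw [← map_sub, RCLike.norm_conj]
    exact RCLike.norm_sub_midpoint_le_of_re_nonneg hx
  have key := norm_average_mul_sub_mul_le (g := fun x => conj (g x)) hf hg.star hf_disc hg_disc
  rw [setAverage_eq, setAverage_eq, setAverage_eq, Real.volume_real_Icc_of_le hab.le] at key
  calc _ ≤ ‖Φ - φ‖ / 2 * (‖Γ - γ‖ / 2) := by simpa only [one_div] using key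
    _ = (1 / 4 : ℝ) * ‖Φ - φ‖ * ‖Γ - γ‖ := by ring
end

section
/- Let x = (x₁,…,xₙ), y = (y₁,…,yₙ) ∈ 𝕜ⁿ (𝕜 = ℝ or ℂ) and φ, γ, Φ, Γ ∈ 𝕜 be such that Re[(Φ − xᵢ)(conj(xᵢ) − conj(φ))] ≥ 0 and Re[(Γ − yᵢ)(conj(yᵢ) − conj(γ))] ≥ 0 for each i ∈ {1,…,n}. Then |(1/n)∑ᵢ₌₁ⁿ xᵢ conj(yᵢ) − (1/n)∑ᵢ₌₁ⁿ xᵢ · (1/n)∑ᵢ₌₁ⁿ conj(yᵢ)| ≤ (1/4)|Φ − φ||Γ − γ|. -/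
/-!
The condition `0 ≤ Re[(Φ - z)(conj z - conj φ)]` says that `z` lies in the closed disc with
diameter `[φ, Φ]`, i.e. `‖z - (Φ + φ) / 2‖ ≤ ‖(Φ - φ) / 2‖`. The left-hand side is the Chebyshev
functional `T(x, w) = 𝔼 xw - 𝔼x 𝔼w` at `w = conj y`; it equals the average of the centred products
`(x - 𝔼x)(w - 𝔼w)`, so by Cauchy–Schwarz `|T(x, w)|` is at most the product of the standard
deviations of `x` and `w`. Since the mean minimises `c ↦ 𝔼‖x - c‖²`, a sequence in a disc of
radius `r` has standard deviation at most `r`.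
-/

open Finset
open scoped BigOperators

section Chebyshev

variable {ι K : Type*} [Fintype ι] [Field K] [CharZero K]

def chebyshevFunctional (x w : ι → K) : K :=
  𝔼 i, x i * w i - (𝔼 i, x i) * 𝔼 i, w i

variable [Nonempty ι]

theorem chebyshevFunctional_eq_expect_sub_mul_sub (x w : ι → K) (p q : K) :
    chebyshevFunctional x w =
      𝔼 i, (x i - p) * (w i - q) - (𝔼 i, x i - p) * (𝔼 i, w i - q) := by
  have hexpand : ∀ i, (x i - p) * (w i - q) = x i * w i - x i * q - p * w i + p * q :=
    fun i => by ring
  simp only [chebyshevFunctional, hexpand, expect_add_distrib, expect_sub_distrib, ← expect_mul,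
    ← mul_expect, Fintype.expect_const]
  ring

theorem chebyshevFunctional_eq_expect_mul (x w : ι → K) :
    chebyshevFunctional x w = 𝔼 i, (x i - 𝔼 j, x j) * (w i - 𝔼 j, w j) := by
  rw [chebyshevFunctional_eq_expect_sub_mul_sub x w (𝔼 j, x j) (𝔼 j, w j), sub_self, zero_mul,
    sub_zero]

end Chebyshev

theorem RCLike.conj_expect {ι 𝕜 : Type*} [RCLike 𝕜] (s : Finset ι) (f : ι → 𝕜) :
    starRingEnd 𝕜 (𝔼 i ∈ s, f i) = 𝔼 i ∈ s, starRingEnd 𝕜 (f i) := by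
  simp only [expect_eq_sum_div_card, map_div₀, map_sum, map_natCast]

theorem RCLike.norm_expect_mul_sq_le {ι 𝕜 : Type*} [RCLike 𝕜] (s : Finset ι) (u w : ι → 𝕜) :
    ‖𝔼 i ∈ s, u i * w i‖ ^ 2 ≤ (𝔼 i ∈ s, ‖u i‖ ^ 2) * 𝔼 i ∈ s, ‖w i‖ ^ 2 :=
  calc ‖𝔼 i ∈ s, u i * w i‖ ^ 2 ≤ (𝔼 i ∈ s, ‖u i‖ * ‖w i‖) ^ 2 := by
        gcongr
        simpa only [norm_mul] using RCLike.norm_expect_le (K := 𝕜) (f := fun i => u i * w i)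
    _ ≤ _ := expect_mul_sq_le_sq_mul_sq s _ _

section

variable {ι 𝕜 : Type*} [Fintype ι] [Nonempty ι] [RCLike 𝕜]

theorem expect_norm_sub_sq (x : ι → 𝕜) (c : 𝕜) :
    𝔼 i, ‖x i - c‖ ^ 2 = 𝔼 i, ‖x i - 𝔼 j, x j‖ ^ 2 + ‖(𝔼 j, x j) - c‖ ^ 2 := by
  -- `T(x, conj x)`, computed with the shifts `c` and `𝔼 x`
  have hshift := chebyshevFunctional_eq_expect_sub_mul_sub x (starRingEnd 𝕜 ∘ x) c
    (starRingEnd 𝕜 c)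
  rw [chebyshevFunctional_eq_expect_mul] at hshift
  simp only [Function.comp_apply, ← RCLike.conj_expect, ← map_sub, RCLike.mul_conj] at hshift
  apply RCLike.ofReal_injective (K := 𝕜)
  push_cast
  rw [hshift]
  ring

theorem expect_norm_sub_expect_sq_le {x : ι → 𝕜} {c : 𝕜} {r : ℝ} (hx : ∀ i, ‖x i - c‖ ≤ r) :
    𝔼 i, ‖x i - 𝔼 j, x j‖ ^ 2 ≤ r ^ 2 :=
  calc 𝔼 i, ‖x i - 𝔼 j, x j‖ ^ 2 ≤ 𝔼 i, ‖x i - c‖ ^ 2 := by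
        rw [expect_norm_sub_sq x c]
        exact le_add_of_nonneg_right (sq_nonneg _)
    _ ≤ 𝔼 _i : ι, r ^ 2 := expect_le_expect fun i _ =>
        pow_le_pow_left₀ (norm_nonneg _) (hx i) 2
    _ = r ^ 2 := Fintype.expect_const _

theorem norm_chebyshevFunctional_le {x w : ι → 𝕜} {c d : 𝕜} {r s : ℝ}
    (hx : ∀ i, ‖x i - c‖ ≤ r) (hw : ∀ i, ‖w i - d‖ ≤ s) :
    ‖chebyshevFunctional x w‖ ≤ r * s := by
  have hr : 0 ≤ r := (norm_nonneg _).trans (hx (Classical.arbitrary ι))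
  have hs : 0 ≤ s := (norm_nonneg _).trans (hw (Classical.arbitrary ι))
  refine le_of_pow_le_pow_left₀ two_ne_zero (mul_nonneg hr hs) ?_
  calc ‖chebyshevFunctional x w‖ ^ 2
      ≤ (𝔼 i, ‖x i - 𝔼 j, x j‖ ^ 2) * 𝔼 i, ‖w i - 𝔼 j, w j‖ ^ 2 := by
        rw [chebyshevFunctional_eq_expect_mul]
        exact RCLike.norm_expect_mul_sq_le _ _ _
    _ ≤ r ^ 2 * s ^ 2 :=
        mul_le_mul (expect_norm_sub_expect_sq_le hx) (expect_norm_sub_expect_sq_le hw)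
          (by positivity) (by positivity)
    _ = (r * s) ^ 2 := (mul_pow r s 2).symm

end

theorem RCLike.re_sub_mul_conj_sub {𝕜 : Type*} [RCLike 𝕜] (Φ φ z : 𝕜) :
    RCLike.re ((Φ - z) * (starRingEnd 𝕜 z - starRingEnd 𝕜 φ)) =
      ‖(Φ - φ) / 2‖ ^ 2 - ‖z - (Φ + φ) / 2‖ ^ 2 := by
  rw [← RCLike.ofReal_inj (K := 𝕜), RCLike.re_eq_add_conj]
  push_cast
  simp only [← RCLike.mul_conj, map_mul, map_sub, map_add, map_div₀, RCLike.conj_conj, map_ofNat]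
  ring

theorem RCLike.norm_sub_midpoint_le_of_re_nonneg_s2 {𝕜 : Type*} [RCLike 𝕜] {Φ φ z : 𝕜}
    (h : 0 ≤ RCLike.re ((Φ - z) * (starRingEnd 𝕜 z - starRingEnd 𝕜 φ))) :
    ‖z - (Φ + φ) / 2‖ ≤ ‖(Φ - φ) / 2‖ := by
  rw [RCLike.re_sub_mul_conj_sub, sub_nonneg] at h
  exact le_of_pow_le_pow_left₀ two_ne_zero (norm_nonneg _) h

theorem one_div_card_smul_sum_eq_expect {ι 𝕜 : Type*} [Fintype ι] [RCLike 𝕜] (f : ι → 𝕜) :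
    (1 / (Fintype.card ι : ℝ)) • ∑ i, f i = 𝔼 i, f i := by
  rw [Fintype.expect_eq_sum_div_card, RCLike.real_smul_eq_coe_mul]
  push_cast
  ring

/-- **Grüss inequality for sums** (Corollary 2). -/
theorem gruss_discrete {𝕜 : Type*} [RCLike 𝕜] (n : ℕ) (hn : 0 < n)
    (x y : Fin n → 𝕜) (φ γ Φ Γ : 𝕜)
    (hx : ∀ i, 0 ≤ RCLike.re ((Φ - x i) * (starRingEnd 𝕜 (x i) - starRingEnd 𝕜 φ)))
    (hy : ∀ i, 0 ≤ RCLike.re ((Γ - y i) * (starRingEnd 𝕜 (y i) - starRingEnd 𝕜 γ))) :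
    ‖((1 / (n : ℝ)) • ∑ i, x i * starRingEnd 𝕜 (y i)) -
        ((1 / (n : ℝ)) • ∑ i, x i) * ((1 / (n : ℝ)) • ∑ i, starRingEnd 𝕜 (y i))‖ ≤
      (1 / 4 : ℝ) * ‖Φ - φ‖ * ‖Γ - γ‖ := by
  have : Nonempty (Fin n) := ⟨⟨0, hn⟩⟩
  have hmean := one_div_card_smul_sum_eq_expect (ι := Fin n) (𝕜 := 𝕜)
  rw [Fintype.card_fin] at hmean
  rw [hmean, hmean, hmean]
  have hx' (i : Fin n) : ‖x i - (Φ + φ) / 2‖ ≤ ‖(Φ - φ) / 2‖ :=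
    RCLike.norm_sub_midpoint_le_of_re_nonneg_s2 (hx i)
  have hy' (i : Fin n) :
      ‖starRingEnd 𝕜 (y i) - starRingEnd 𝕜 ((Γ + γ) / 2)‖ ≤ ‖(Γ - γ) / 2‖ := by
    rw [← map_sub, RCLike.norm_conj]
    exact RCLike.norm_sub_midpoint_le_of_re_nonneg_s2 (hy i)
  calc _ ≤ ‖(Φ - φ) / 2‖ * ‖(Γ - γ) / 2‖ := norm_chebyshevFunctional_le hx' hy'
    _ = _ := by rw [norm_div, norm_div, RCLike.norm_ofNat]; ring
end

section
/- Let H be an inner product space over 𝕜 (𝕜 = ℝ or ℂ), x, y, e ∈ H with ‖e‖ = 1, and scalars a, A, b, B ∈ 𝕜 with Re(conj(a)·A) > 0 and Re(conj(b)·B) > 0. If Re⟨Ae − x, x − ae⟩ ≥ 0 and Re⟨Be − y, y − be⟩ ≥ 0, then |⟨x,y⟩ − ⟨x,e⟩⟨e,y⟩| ≤ (1/4)·M(a,A)·M(b,B)·|⟨x,e⟩⟨e,y⟩|, where M(a,A) := [((|A| − |a|)² + 4(|A·conj(a)| − Re(A·conj(a))))/Re(conj(a)·A)]^{1/2}. 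-/
/-!
Write `c = ⟪e, x⟫`. Since `‖e‖ = 1`, expanding the hypothesis on `x` gives
`‖x‖² ≤ (‖A‖ + ‖a‖)‖c‖ - Re(conj a · A)`, and `‖x - c e‖² = ‖x‖² - ‖c‖²`. Bounding
`u - p ≤ u² / (4p)` (AM-GM) with `u = (‖A‖ + ‖a‖)‖c‖` turns this into
`‖x - c e‖ ≤ ½ M(a, A) ‖c‖`, because `M(a, A)² = ((‖A‖ + ‖a‖)² - 4 Re(conj a · A)) / Re(conj a · A)`.
The same holds for `y`, and the theorem follows from Cauchy–Schwarz, as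
`⟪x - ⟪e, x⟫ e, y - ⟪e, y⟫ e⟫ = ⟪x, y⟫ - ⟪x, e⟫⟪e, y⟫`.
-/

/-- The constant `M(a, A)` from Theorem 2. -/
noncomputable def grussM {𝕜 : Type*} [RCLike 𝕜] (a A : 𝕜) : ℝ :=
  Real.sqrt (((‖A‖ - ‖a‖) ^ 2 +
      4 * (‖A * starRingEnd 𝕜 a‖ - RCLike.re (A * starRingEnd 𝕜 a))) /
    RCLike.re (starRingEnd 𝕜 a * A))

open RCLike

theorem sub_le_sq_div {u p : ℝ} (hp : 0 < p) : u - p ≤ u ^ 2 / (4 * p) := by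
  rw [le_div_iff₀ (by positivity)]
  nlinarith [sq_nonneg (u - 2 * p)]

section

variable {𝕜 H : Type*} [RCLike 𝕜] [NormedAddCommGroup H] [InnerProductSpace 𝕜 H]

local notation "⟪" x ", " y "⟫" => (inner 𝕜 x y : 𝕜)

theorem grussM_nonneg (a A : 𝕜) : 0 ≤ grussM a A := Real.sqrt_nonneg _

theorem grussM_sq {a A : 𝕜} (haA : 0 < re (starRingEnd 𝕜 a * A)) :
    grussM a A ^ 2 =
      ((‖A‖ + ‖a‖) ^ 2 - 4 * re (starRingEnd 𝕜 a * A)) / re (starRingEnd 𝕜 a * A) := by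
  have hnum : (‖A‖ - ‖a‖) ^ 2 + 4 * (‖A * starRingEnd 𝕜 a‖ - re (A * starRingEnd 𝕜 a)) =
      (‖A‖ + ‖a‖) ^ 2 - 4 * re (starRingEnd 𝕜 a * A) := by
    rw [norm_mul, norm_conj, mul_comm A]; ring
  have hre : re (starRingEnd 𝕜 a * A) ≤ ‖a‖ * ‖A‖ := by
    simpa only [norm_mul, norm_conj] using re_le_norm (starRingEnd 𝕜 a * A)
  rw [grussM, hnum, Real.sq_sqrt]
  apply div_nonneg _ haA.le
  nlinarith [sq_nonneg (‖A‖ - ‖a‖)]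

theorem inner_sub_inner_smul_of_norm_eq_one {e : H} (he : ‖e‖ = 1) (x y : H) :
    ⟪x - ⟪e, x⟫ • e, y - ⟪e, y⟫ • e⟫ = ⟪x, y⟫ - ⟪x, e⟫ * ⟪e, y⟫ := by
  have hee : ⟪e, e⟫ = 1 := by simp [inner_self_eq_norm_sq_to_K, he]
  simp only [inner_sub_left, inner_sub_right, inner_smul_left, inner_smul_right, hee,
    inner_conj_symm]
  ring

theorem norm_sub_inner_smul_sq_of_norm_eq_one {e : H} (he : ‖e‖ = 1) (x : H) :
    ‖x - ⟪e, x⟫ • e‖ ^ 2 = ‖x‖ ^ 2 - ‖⟪e, x⟫‖ ^ 2 := by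
  rw [@norm_sq_eq_re_inner 𝕜, @norm_sq_eq_re_inner 𝕜 _ _ _ _ x,
    inner_sub_inner_smul_of_norm_eq_one he, ← inner_conj_symm e x, mul_conj, map_sub,
    norm_conj, ← ofReal_pow, ofReal_re]

theorem re_inner_smul_sub_sub_smul_of_norm_eq_one {e : H} (he : ‖e‖ = 1) (x : H) (a A : 𝕜) :
    re ⟪A • e - x, x - a • e⟫ =
      re (starRingEnd 𝕜 (A + a) * ⟪e, x⟫) - re (starRingEnd 𝕜 a * A) - ‖x‖ ^ 2 := by
  have hee : ⟪e, e⟫ = 1 := by simp [inner_self_eq_norm_sq_to_K, he]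
  have hxx : re ⟪x, x⟫ = ‖x‖ ^ 2 := (norm_sq_eq_re_inner x).symm
  have hxe : ⟪x, e⟫ = starRingEnd 𝕜 ⟪e, x⟫ := (inner_conj_symm x e).symm
  have hconj (u v : 𝕜) : re (starRingEnd 𝕜 u * v) = re (u * starRingEnd 𝕜 v) := by
    rw [← conj_re, map_mul, conj_conj, mul_comm]
  simp only [inner_sub_left, inner_sub_right, inner_smul_left, inner_smul_right, hee, hxe,
    map_sub, map_add, mul_one, add_mul, mul_sub, hxx, hconj a]
  ring

theorem norm_sq_le_of_re_inner_smul_sub_sub_smul_nonneg {e : H} (he : ‖e‖ = 1) {x : H}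
    {a A : 𝕜} (hx : 0 ≤ re ⟪A • e - x, x - a • e⟫) :
    ‖x‖ ^ 2 ≤ (‖A‖ + ‖a‖) * ‖⟪e, x⟫‖ - re (starRingEnd 𝕜 a * A) := by
  rw [re_inner_smul_sub_sub_smul_of_norm_eq_one he] at hx
  have : re (starRingEnd 𝕜 (A + a) * ⟪e, x⟫) ≤ (‖A‖ + ‖a‖) * ‖⟪e, x⟫‖ :=
    calc _ ≤ ‖starRingEnd 𝕜 (A + a) * ⟪e, x⟫‖ := re_le_norm _
      _ ≤ (‖A‖ + ‖a‖) * ‖⟪e, x⟫‖ := by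
        rw [norm_mul, norm_conj]; gcongr; exact norm_add_le A a
  linarith

theorem norm_sub_inner_smul_le_grussM {e : H} (he : ‖e‖ = 1) {x : H} {a A : 𝕜}
    (haA : 0 < re (starRingEnd 𝕜 a * A)) (hx : 0 ≤ re ⟪A • e - x, x - a • e⟫) :
    ‖x - ⟪e, x⟫ • e‖ ≤ 1 / 2 * grussM a A * ‖⟪e, x⟫‖ := by
  set p := re (starRingEnd 𝕜 a * A) with hp
  set t := ‖⟪e, x⟫‖
  have hM := grussM_nonneg a A
  refine le_of_pow_le_pow_left₀ two_ne_zero (by positivity) ?_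
  calc ‖x - ⟪e, x⟫ • e‖ ^ 2 = ‖x‖ ^ 2 - t ^ 2 := norm_sub_inner_smul_sq_of_norm_eq_one he x
    _ ≤ (‖A‖ + ‖a‖) * t - p - t ^ 2 := by
        linarith [norm_sq_le_of_re_inner_smul_sub_sub_smul_nonneg he hx]
    _ ≤ ((‖A‖ + ‖a‖) * t) ^ 2 / (4 * p) - t ^ 2 := by
        linarith [sub_le_sq_div (u := (‖A‖ + ‖a‖) * t) haA]
    _ = (1 / 2 * grussM a A * t) ^ 2 := by
        rw [mul_pow, mul_pow, mul_pow, grussM_sq haA, ← hp]; field_simp; ring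

end

/-- **A Grüss type inequality** (Theorem 2). -/
theorem gruss_companion {𝕜 H : Type*} [RCLike 𝕜] [NormedAddCommGroup H]
    [InnerProductSpace 𝕜 H] (x y e : H) (he : ‖e‖ = 1) (a A b B : 𝕜)
    (haA : 0 < RCLike.re (starRingEnd 𝕜 a * A))
    (hbB : 0 < RCLike.re (starRingEnd 𝕜 b * B))
    (hx : 0 ≤ RCLike.re (inner 𝕜 (A • e - x) (x - a • e) : 𝕜))
    (hy : 0 ≤ RCLike.re (inner 𝕜 (B • e - y) (y - b • e) : 𝕜)) :
    ‖(inner 𝕜 x y : 𝕜) - (inner 𝕜 x e : 𝕜) * (inner 𝕜 e y : 𝕜)‖ ≤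
      (1 / 4 : ℝ) * grussM a A * grussM b B * ‖(inner 𝕜 x e : 𝕜) * (inner 𝕜 e y : 𝕜)‖ := by
  have hM := grussM_nonneg a A
  rw [← inner_sub_inner_smul_of_norm_eq_one he, norm_mul, norm_inner_symm x e]
  calc _ ≤ ‖x - (inner 𝕜 e x : 𝕜) • e‖ * ‖y - (inner 𝕜 e y : 𝕜) • e‖ := norm_inner_le_norm _ _
    _ ≤ (1 / 2 * grussM a A * ‖(inner 𝕜 e x : 𝕜)‖) * (1 / 2 * grussM b B * ‖(inner 𝕜 e y : 𝕜)‖) :=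
        mul_le_mul (norm_sub_inner_smul_le_grussM he haA hx)
          (norm_sub_inner_smul_le_grussM he hbB hy) (norm_nonneg _) (by positivity)
    _ = _ := by ring
end

section
/- The constant 1/4 in Corollary 3 is best possible: for every constant k > 0 such that for all A > a > 0 and all x in the real inner product space ℝ² with e = (1/√2, 1/√2) satisfying ⟨Ae − x, x − ae⟩ ≥ 0 one has ‖x‖² − ⟨x,e⟩² ≤ k·((A−a)²/(aA))·⟨x,e⟩², it follows that k ≥ 1/4. -/
/-!
Write `x = t • e + s • f` with `f` a unit vector orthogonal to `e`. Then `⟪x, e⟫ = t`, the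
left-hand side is `s²`, and the constraint `⟪A • e - x, x - a • e⟫ ≥ 0` reads
`s² ≤ (A - t) (t - a)`. For `t = 2aA / (a + A)` and `s² = (A - t) (t - a)` the ratio `s² / t²`
equals `(A - a)² / (4aA)`, so such an `x` attains the bound with constant `1/4`.
-/

noncomputable def grussUnitVec : EuclideanSpace ℝ (Fin 2) :=
  (EuclideanSpace.equiv (Fin 2) ℝ).symm ![1 / Real.sqrt 2, 1 / Real.sqrt 2]

open RealInnerProductSpace

section OrthonormalPair

variable {E : Type*} [NormedAddCommGroup E] [InnerProductSpace ℝ E] {e f : E}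

lemma inner_smul_add_smul_left_of_orthonormal (he : ‖e‖ = 1) (hef : ⟪e, f⟫ = 0) (t s : ℝ) :
    ⟪t • e + s • f, e⟫ = t := by
  rw [inner_add_left, inner_smul_left, inner_smul_left, real_inner_self_eq_norm_sq, he,
    real_inner_comm, hef]
  simp

lemma norm_sq_smul_add_smul_of_orthonormal (he : ‖e‖ = 1) (hf : ‖f‖ = 1) (hef : ⟪e, f⟫ = 0)
    (t s : ℝ) : ‖t • e + s • f‖ ^ 2 = t ^ 2 + s ^ 2 := by
  rw [norm_add_sq_real, norm_smul, norm_smul, inner_smul_left, inner_smul_right, hef, he, hf]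
  simp [sq_abs]

lemma inner_sub_smul_add_smul_of_orthonormal (he : ‖e‖ = 1) (hf : ‖f‖ = 1)
    (hef : ⟪e, f⟫ = 0) (a A t s : ℝ) :
    ⟪A • e - (t • e + s • f), t • e + s • f - a • e⟫ = (A - t) * (t - a) - s ^ 2 := by
  have hfe : ⟪f, e⟫ = 0 := by rw [real_inner_comm, hef]
  have hee : ⟪e, e⟫ = 1 := by rw [real_inner_self_eq_norm_sq, he, one_pow]
  have hff : ⟪f, f⟫ = 1 := by rw [real_inner_self_eq_norm_sq, hf, one_pow]
  simp only [inner_sub_left, inner_sub_right, inner_add_left, inner_add_right, inner_smul_left,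
    inner_smul_right, hee, hff, hef, hfe, RCLike.conj_to_real]
  ring

theorem one_quarter_le_of_gruss_companion (he : ‖e‖ = 1) (hf : ‖f‖ = 1) (hef : ⟪e, f⟫ = 0)
    {k : ℝ}
    (h : ∀ a A : ℝ, A > a → a > 0 → ∀ x : E, 0 ≤ ⟪A • e - x, x - a • e⟫ →
      ‖x‖ ^ 2 - ⟪x, e⟫ ^ 2 ≤ k * ((A - a) ^ 2 / (a * A)) * ⟪x, e⟫ ^ 2) :
    1 / 4 ≤ k := by
  -- The extremal vector for `a = 1`, `A = 4`: `t = 2aA / (a + A) = 8/5`, `s = √(aA) (A - a) / (a + A) = 6/5`.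
  have hx := h 1 4 (by norm_num) one_pos ((8 / 5 : ℝ) • e + (6 / 5 : ℝ) • f)
  rw [inner_sub_smul_add_smul_of_orthonormal he hf hef,
    norm_sq_smul_add_smul_of_orthonormal he hf hef,
    inner_smul_add_smul_left_of_orthonormal he hef] at hx
  norm_num at hx
  linarith

end OrthonormalPair

lemma norm_grussUnitVec : ‖grussUnitVec‖ = 1 := by
  rw [EuclideanSpace.norm_eq, Real.sqrt_eq_one]
  simp [grussUnitVec, Fin.sum_univ_two]
  norm_num

lemma exists_unit_orthogonal_grussUnitVec :
    ∃ f : EuclideanSpace ℝ (Fin 2), ‖f‖ = 1 ∧ ⟪grussUnitVec, f⟫ = 0 := by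
  refine ⟨!₂[1 / Real.sqrt 2, -(1 / Real.sqrt 2)], ?_, ?_⟩
  · rw [EuclideanSpace.norm_eq, Real.sqrt_eq_one]
    simp [Fin.sum_univ_two]
    norm_num
  · simp [grussUnitVec, PiLp.inner_apply, Fin.sum_univ_two]

theorem gruss_companion_sharp_general (k : ℝ)
    (h : ∀ a A : ℝ, A > a → a > 0 → ∀ x : EuclideanSpace ℝ (Fin 2),
      0 ≤ (inner ℝ (A • grussUnitVec - x) (x - a • grussUnitVec) : ℝ) →
      ‖x‖ ^ 2 - (inner ℝ x grussUnitVec : ℝ) ^ 2 ≤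
        k * ((A - a) ^ 2 / (a * A)) * (inner ℝ x grussUnitVec : ℝ) ^ 2) :
    k ≥ 1 / 4 := by
  obtain ⟨f, hf, hef⟩ := exists_unit_orthogonal_grussUnitVec
  exact one_quarter_le_of_gruss_companion norm_grussUnitVec hf hef h

/-- **Sharpness of the constant `1/4` in Corollary 3**: any constant `k > 0` making the
inequality hold for all admissible data in `ℝ²` with `e = (1/√2, 1/√2)` satisfies `k ≥ 1/4`. -/
theorem gruss_companion_sharp (k : ℝ) (hk : 0 < k)
    (h : ∀ a A : ℝ, A > a → a > 0 → ∀ x : EuclideanSpace ℝ (Fin 2),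
      0 ≤ (inner ℝ (A • grussUnitVec - x) (x - a • grussUnitVec) : ℝ) →
      ‖x‖ ^ 2 - (inner ℝ x grussUnitVec : ℝ) ^ 2 ≤
        k * ((A - a) ^ 2 / (a * A)) * (inner ℝ x grussUnitVec : ℝ) ^ 2) :
    k ≥ 1 / 4 :=
  gruss_companion_sharp_general k h
end

section
/- Let H be an inner product space over 𝕜 (𝕜 = ℝ or ℂ), x, y, e ∈ H with ‖e‖ = 1 and ⟨x,e⟩ ≠ 0, ⟨e,y⟩ ≠ 0, and real numbers a, A, b, B with A > a > 0, B > b > 0. If ‖x − ((a+A)/2)e‖ ≤ (1/2)(A − a) and ‖y − ((b+B)/2)e‖ ≤ (1/2)(B − b), then |⟨x,y⟩/(⟨x,e⟩⟨e,y⟩) − 1| ≤ (1/4)·(A − a)(B − b)/√(abAB). -/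
/-!
Put `u = x - ⟪e, x⟫ e` and `v = y - ⟪e, y⟫ e`. Then `⟪x, y⟫ - ⟪x, e⟫⟪e, y⟫ = ⟪u, v⟫`, so by
Cauchy–Schwarz it suffices to show `‖u‖ ≤ (A - a) / (2√(aA)) · |⟪e, x⟫|`. Expanding the square,
the ball condition on `x` reads `‖x‖² + aA ≤ (a + A) Re⟪e, x⟫`; since `‖x‖² = ‖u‖² + |⟪e, x⟫|²`,
this is a quadratic inequality in `|⟪e, x⟫|` which yields the bound on `‖u‖` and also forces
`⟪e, x⟫ ≠ 0`.
-/

open RCLike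
open scoped InnerProductSpace

lemma two_sqrt_mul_mul_le_of_sq_add_sq_add_mul_le {a A p t : ℝ} (haA : 0 ≤ a * A) (hAa : a ≤ A)
    (ht : 0 ≤ t) (h : p ^ 2 + t ^ 2 + a * A ≤ (a + A) * t) :
    2 * √(a * A) * p ≤ (A - a) * t := by
  -- `(A - a)² t² - 4 a A p² ≥ ((a + A) t - 2 a A)² ≥ 0`
  have hsq : (2 * √(a * A) * p) ^ 2 ≤ ((A - a) * t) ^ 2 := by
    rw [mul_pow, mul_pow, Real.sq_sqrt haA]
    nlinarith [sq_nonneg ((a + A) * t - 2 * (a * A))]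
  exact le_of_sq_le_sq hsq (mul_nonneg (sub_nonneg.2 hAa) ht)

section UnitVector

variable {𝕜 H : Type*} [RCLike 𝕜] [NormedAddCommGroup H] [InnerProductSpace 𝕜 H]
  {e : H}

lemma inner_sub_inner_mul_inner_eq_inner_sub_inner_smul (he : ‖e‖ = 1) (x y : H) :
    ⟪x, y⟫_𝕜 - ⟪x, e⟫_𝕜 * ⟪e, y⟫_𝕜 = ⟪x - ⟪e, x⟫_𝕜 • e, y - ⟪e, y⟫_𝕜 • e⟫_𝕜 := by
  have hee : ⟪e, e⟫_𝕜 = 1 := by rw [inner_self_eq_norm_sq_to_K, he]; norm_num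
  simp only [inner_sub_left, inner_sub_right, inner_smul_left, inner_smul_right,
    inner_conj_symm, hee, mul_one]
  ring

lemma norm_sub_inner_smul_sq (he : ‖e‖ = 1) (x : H) :
    ‖x - ⟪e, x⟫_𝕜 • e‖ ^ 2 = ‖x‖ ^ 2 - ‖⟪e, x⟫_𝕜‖ ^ 2 := by
  rw [@norm_sub_sq 𝕜, inner_smul_right, ← inner_conj_symm e x, RCLike.conj_mul, norm_smul, he,
    norm_conj, ← ofReal_pow, ofReal_re]
  ring

variable {a A : ℝ} {x : H}

-- The conclusion is `re ⟪A • e - x, x - a • e⟫ ≥ 0` written out.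
lemma norm_sq_add_mul_le_of_norm_sub_smul_le (he : ‖e‖ = 1)
    (hx : ‖x - (((a + A) / 2 : ℝ) : 𝕜) • e‖ ≤ (1 / 2) * (A - a)) :
    ‖x‖ ^ 2 + a * A ≤ (a + A) * re ⟪e, x⟫_𝕜 := by
  have hsq := pow_le_pow_left₀ (norm_nonneg _) hx 2
  rw [@norm_sub_sq 𝕜, inner_smul_right, re_ofReal_mul, norm_smul, norm_ofReal, he,
    inner_re_symm] at hsq
  nlinarith [abs_mul_abs_self ((a + A) / 2)]

lemma le_of_norm_sub_smul_le (hx : ‖x - (((a + A) / 2 : ℝ) : 𝕜) • e‖ ≤ (1 / 2) * (A - a)) :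
    a ≤ A := by
  nlinarith [norm_nonneg (x - (((a + A) / 2 : ℝ) : 𝕜) • e)]

lemma re_inner_pos_of_norm_sub_smul_le (he : ‖e‖ = 1) (ha : 0 < a)
    (hx : ‖x - (((a + A) / 2 : ℝ) : 𝕜) • e‖ ≤ (1 / 2) * (A - a)) :
    0 < re ⟪e, x⟫_𝕜 := by
  have hA := ha.trans_le (le_of_norm_sub_smul_le hx)
  have := norm_sq_add_mul_le_of_norm_sub_smul_le he hx
  nlinarith [sq_nonneg ‖x‖, mul_pos ha hA]

lemma norm_sub_inner_smul_le (he : ‖e‖ = 1) (ha : 0 < a)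
    (hx : ‖x - (((a + A) / 2 : ℝ) : 𝕜) • e‖ ≤ (1 / 2) * (A - a)) :
    ‖x - ⟪e, x⟫_𝕜 • e‖ ≤ (A - a) / (2 * √(a * A)) * ‖⟪e, x⟫_𝕜‖ := by
  have hAa := le_of_norm_sub_smul_le hx
  have haA : 0 < a * A := mul_pos ha (ha.trans_le hAa)
  have hball := norm_sq_add_mul_le_of_norm_sub_smul_le he hx
  have hre := re_le_norm ⟪e, x⟫_𝕜
  rw [div_mul_eq_mul_div, le_div_iff₀ (by positivity), mul_comm]
  refine two_sqrt_mul_mul_le_of_sq_add_sq_add_mul_le haA.le hAa (norm_nonneg _) ?_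
  rw [norm_sub_inner_smul_sq he]
  nlinarith

end UnitVector

theorem gruss_companion_ratio_general {𝕜 H : Type*} [RCLike 𝕜] [NormedAddCommGroup H]
    [InnerProductSpace 𝕜 H] (x y e : H) (he : ‖e‖ = 1)
    (a A b B : ℝ)
    (ha : 0 < a) (hb : 0 < b)
    (hx : ‖x - (((a + A) / 2 : ℝ) : 𝕜) • e‖ ≤ (1 / 2) * (A - a))
    (hy : ‖y - (((b + B) / 2 : ℝ) : 𝕜) • e‖ ≤ (1 / 2) * (B - b)) :
    ‖(inner 𝕜 x y) / ((inner 𝕜 x e) * (inner 𝕜 e y)) - 1‖ ≤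
      (1 / 4 : ℝ) * ((A - a) * (B - b) / Real.sqrt (a * b * A * B)) := by
  have hxe : 0 < ‖⟪e, x⟫_𝕜‖ := (re_inner_pos_of_norm_sub_smul_le he ha hx).trans_le (re_le_norm _)
  have hey : 0 < ‖⟪e, y⟫_𝕜‖ := (re_inner_pos_of_norm_sub_smul_le he hb hy).trans_le (re_le_norm _)
  have hA : 0 < A := ha.trans_le (le_of_norm_sub_smul_le hx)
  have hB : 0 < B := hb.trans_le (le_of_norm_sub_smul_le hy)
  have hu := norm_sub_inner_smul_le he ha hx
  have hv := norm_sub_inner_smul_le he hb hy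
  have hsqrt : √(a * b * A * B) = √(a * A) * √(b * B) := by
    rw [← Real.sqrt_mul (by positivity)]; ring_nf
  calc ‖⟪x, y⟫_𝕜 / (⟪x, e⟫_𝕜 * ⟪e, y⟫_𝕜) - 1‖
      = ‖⟪x - ⟪e, x⟫_𝕜 • e, y - ⟪e, y⟫_𝕜 • e⟫_𝕜‖ / (‖⟪e, x⟫_𝕜‖ * ‖⟪e, y⟫_𝕜‖) := by
        rw [div_sub_one, inner_sub_inner_mul_inner_eq_inner_sub_inner_smul he, norm_div,
          norm_mul, norm_inner_symm x]
        exact mul_ne_zero (norm_pos_iff.1 (by rwa [norm_inner_symm])) (norm_pos_iff.1 hey)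
    _ ≤ ‖x - ⟪e, x⟫_𝕜 • e‖ * ‖y - ⟪e, y⟫_𝕜 • e‖ / (‖⟪e, x⟫_𝕜‖ * ‖⟪e, y⟫_𝕜‖) := by
        gcongr; exact norm_inner_le_norm _ _
    _ ≤ ((A - a) / (2 * √(a * A)) * ‖⟪e, x⟫_𝕜‖) * ((B - b) / (2 * √(b * B)) * ‖⟪e, y⟫_𝕜‖) /
          (‖⟪e, x⟫_𝕜‖ * ‖⟪e, y⟫_𝕜‖) := by
        gcongr
        exact (norm_nonneg _).trans hu
    _ = (1 / 4 : ℝ) * ((A - a) * (B - b) / √(a * b * A * B)) := by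
        rw [hsqrt]; field_simp; ring

/-- **A Grüss type inequality in ratio form** (Remark 1, inequality (2.16)). -/
theorem gruss_companion_ratio {𝕜 H : Type*} [RCLike 𝕜] [NormedAddCommGroup H]
    [InnerProductSpace 𝕜 H] (x y e : H) (he : ‖e‖ = 1)
    (hxe : (inner 𝕜 x e) ≠ 0) (hey : (inner 𝕜 e y) ≠ 0) (a A b B : ℝ)
    (ha : 0 < a) (haA : a < A) (hb : 0 < b) (hbB : b < B)
    (hx : ‖x - (((a + A) / 2 : ℝ) : 𝕜) • e‖ ≤ (1 / 2) * (A - a))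
    (hy : ‖y - (((b + B) / 2 : ℝ) : 𝕜) • e‖ ≤ (1 / 2) * (B - b)) :
    ‖(inner 𝕜 x y) / ((inner 𝕜 x e) * (inner 𝕜 e y)) - 1‖ ≤
      (1 / 4 : ℝ) * ((A - a) * (B - b) / Real.sqrt (a * b * A * B)) :=
  gruss_companion_ratio_general x y e he a A b B ha hb hx hy
end

section
/- Let H be an inner product space over 𝕜 (𝕜 = ℝ or ℂ), u, v ∈ H, and c, C ∈ 𝕜 with Re(conj(c)·C) > 0. If Re⟨Cv − u, u − cv⟩ ≥ 0, then ‖u‖·‖v‖ ≤ ((|c| + |C|)/(2·[Re(conj(c)·C)]^{1/2}))·|⟨u,v⟩|. -/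
/-!
Expanding the hypothesis gives `‖u‖² + Re(c̄C)‖v‖² ≤ Re((c + C)⟨u, v⟩) ≤ (|c| + |C|)|⟨u, v⟩|`,
and the left side dominates `2 √Re(c̄C) ‖u‖‖v‖` by AM-GM.
-/

open RCLike ComplexConjugate

section InnerProductSpace

variable {𝕜 H : Type*} [RCLike 𝕜] [NormedAddCommGroup H] [InnerProductSpace 𝕜 H]

local notation "⟪" x ", " y "⟫" => inner 𝕜 x y

theorem re_inner_smul_sub_sub_smul (u v : H) (c C : 𝕜) :
    re ⟪C • v - u, u - c • v⟫ = re ((c + C) * ⟪u, v⟫) - ‖u‖ ^ 2 - re (conj c * C) * ‖v‖ ^ 2 := by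
  have hvu : re (conj C * ⟪v, u⟫) = re (C * ⟪u, v⟫) := by
    rw [← inner_conj_symm v u, ← map_mul, conj_re]
  have hcC : re (conj C * c) = re (conj c * C) := by
    rw [← conj_re, map_mul, conj_conj, mul_comm]
  have hexp : ⟪C • v - u, u - c • v⟫
      = conj C * ⟪v, u⟫ + c * ⟪u, v⟫ - ⟪u, u⟫ - (conj C * c) * ⟪v, v⟫ := by
    simp only [inner_sub_left, inner_sub_right, inner_smul_left, inner_smul_right]
    ring
  rw [hexp, inner_self_eq_norm_sq_to_K, inner_self_eq_norm_sq_to_K, ← ofReal_pow, ← ofReal_pow]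
  simp only [map_sub, map_add, hvu, re_mul_ofReal, ofReal_re, hcC, add_mul]
  ring

theorem sq_norm_add_mul_sq_norm_le_of_re_inner_nonneg {u v : H} {c C : 𝕜}
    (h : 0 ≤ re ⟪C • v - u, u - c • v⟫) :
    ‖u‖ ^ 2 + re (conj c * C) * ‖v‖ ^ 2 ≤ ‖c + C‖ * ‖⟪u, v⟫‖ := by
  rw [re_inner_smul_sub_sub_smul] at h
  have := (re_le_norm ((c + C) * ⟪u, v⟫)).trans_eq (norm_mul _ _)
  linarith

end InnerProductSpace

theorem two_mul_sqrt_mul_mul_le_sq_add_mul_sq (a b : ℝ) {r : ℝ} (hr : 0 ≤ r) :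
    2 * √r * (a * b) ≤ a ^ 2 + r * b ^ 2 := by
  have := two_mul_le_add_sq a (√r * b)
  rw [mul_pow, Real.sq_sqrt hr] at this
  linarith

/-- A reverse of the Schwarz inequality (from the proof of Theorem 2). -/
theorem reverse_schwarz {𝕜 H : Type*} [RCLike 𝕜] [NormedAddCommGroup H]
    [InnerProductSpace 𝕜 H] (u v : H) (c C : 𝕜)
    (hcC : 0 < RCLike.re (starRingEnd 𝕜 c * C))
    (h : 0 ≤ RCLike.re (inner 𝕜 (C • v - u) (u - c • v))) :
    ‖u‖ * ‖v‖ ≤ ((‖c‖ + ‖C‖) / (2 * Real.sqrt (RCLike.re (starRingEnd 𝕜 c * C)))) *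
      ‖(inner 𝕜 u v)‖ := by
  rw [div_mul_eq_mul_div, le_div_iff₀ (by positivity)]
  calc ‖u‖ * ‖v‖ * (2 * √(re (conj c * C)))
      = 2 * √(re (conj c * C)) * (‖u‖ * ‖v‖) := by ring
    _ ≤ ‖u‖ ^ 2 + re (conj c * C) * ‖v‖ ^ 2 := two_mul_sqrt_mul_mul_le_sq_add_mul_sq _ _ hcC.le
    _ ≤ ‖c + C‖ * ‖inner 𝕜 u v‖ := sq_norm_add_mul_sq_norm_le_of_re_inner_nonneg h
    _ ≤ (‖c‖ + ‖C‖) * ‖inner 𝕜 u v‖ := by gcongr; exact norm_add_le c C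
end

section
/- Let H be an inner product space over 𝕜 (𝕜 = ℝ or ℂ), x, e ∈ H with ‖e‖ = 1, and a, A ∈ 𝕜. Then Re⟨Ae − x, x − ae⟩ ≥ 0 if and only if ‖x − ((a + A)/2)e‖ ≤ (1/2)|A − a|. -/
open RCLike

section Midpoint

variable {𝕜 H : Type*} [RCLike 𝕜] [NormedAddCommGroup H] [InnerProductSpace 𝕜 H]

theorem re_inner_sub_sub_eq_sq_sub_sq (u v x : H) :
    re (inner 𝕜 (u - x) (x - v)) =
      ((1 / 2 : ℝ) * ‖u - v‖) ^ 2 - ‖x - (2⁻¹ : 𝕜) • (u + v)‖ ^ 2 := by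
  have hsum : (u - x) + (x - v) = u - v := by abel
  have hdiff : (u - x) - (x - v) = (-2 : 𝕜) • (x - (2⁻¹ : 𝕜) • (u + v)) := by module
  have hnorm : ‖(u - x) - (x - v)‖ = 2 * ‖x - (2⁻¹ : 𝕜) • (u + v)‖ := by
    rw [hdiff, norm_smul, norm_neg, RCLike.norm_ofNat]
  rw [re_inner_eq_norm_add_mul_self_sub_norm_sub_mul_self_div_four, hsum, hnorm]
  ring

theorem norm_smul_sub_smul_of_norm_eq_one {e : H} (he : ‖e‖ = 1) (a A : 𝕜) :
    ‖A • e - a • e‖ = ‖A - a‖ := by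
  rw [← sub_smul, norm_smul, he, mul_one]

end Midpoint

/-- Equivalence of the two forms of the constraint (as in (2.1)⇔(2.2)):
`Re⟨Ae - x, x - ae⟩ ≥ 0` iff `‖x - ((a+A)/2)e‖ ≤ |A - a|/2`, for a unit vector `e`. -/
theorem re_inner_nonneg_iff_norm_le {𝕜 H : Type*} [RCLike 𝕜] [NormedAddCommGroup H]
    [InnerProductSpace 𝕜 H] (x e : H) (he : ‖e‖ = 1) (a A : 𝕜) :
    0 ≤ RCLike.re (inner 𝕜 (A • e - x) (x - a • e)) ↔
      ‖x - ((a + A) / 2) • e‖ ≤ (1 / 2 : ℝ) * ‖A - a‖ := by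
  have hmid : (2⁻¹ : 𝕜) • (A • e + a • e) = ((a + A) / 2) • e := by module
  rw [re_inner_sub_sub_eq_sq_sub_sq, hmid, norm_smul_sub_smul_of_norm_eq_one he, sub_nonneg]
  exact sq_le_sq₀ (norm_nonneg _) (by positivity)
end

section
/- Let H be an inner product space over 𝕜 (𝕜 = ℝ or ℂ), γ, Γ ∈ 𝕜, e, x, y ∈ H with ‖e‖ = 1, and λ ∈ (0,1). If Re⟨Γe − (λx + (1−λ)y), (λx + (1−λ)y) − γe⟩ ≥ 0, then Re[⟨x,y⟩ − ⟨x,e⟩⟨e,y⟩] ≤ (1/16)·(1/(λ(1−λ)))·|Γ − γ|². -/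
/-!
Put `z = λx + (1-λ)y`, `a = ⟪e, z⟫` and let `P` be the orthogonal projection onto `e^⊥`. Since
`z = a e + P z`, the hypothesis reads `‖P z‖² ≤ Re ⟪Γ - a, a - γ⟫ ≤ |Γ - γ|² / 4`, the last step
being `4 Re ⟪u, v⟫ ≤ ‖u + v‖²` in `𝕜`. The same inequality in `H`, applied to `λ P x` and
`(1-λ) P y`, bounds `4λ(1-λ) Re ⟪P x, P y⟫` by `‖P z‖²`, and `⟪P x, P y⟫ = ⟪x, y⟫ - ⟪x, e⟫⟪e, y⟫`.
-/

open RCLike Submodule ComplexConjugate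
open scoped InnerProductSpace

section
variable {𝕜 E : Type*} [RCLike 𝕜] [NormedAddCommGroup E] [InnerProductSpace 𝕜 E]

theorem four_mul_re_inner_le_norm_add_sq (u v : E) : 4 * re ⟪u, v⟫_𝕜 ≤ ‖u + v‖ ^ 2 := by
  nlinarith [norm_add_sq (𝕜 := 𝕜) u v, norm_sub_sq (𝕜 := 𝕜) u v, sq_nonneg ‖u - v‖]

theorem four_mul_mul_re_inner_le_norm_add_sq (s t : ℝ) (u v : E) :
    4 * (s * t) * re ⟪u, v⟫_𝕜 ≤ ‖(s : 𝕜) • u + (t : 𝕜) • v‖ ^ 2 := by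
  have := four_mul_re_inner_le_norm_add_sq (𝕜 := 𝕜) ((s : 𝕜) • u) ((t : 𝕜) • v)
  rwa [inner_smul_real_left, inner_smul_real_right, smul_smul, smul_re, ← mul_assoc] at this

variable {e : E} (he : ‖e‖ = 1)
include he

theorem starProjection_orthogonal_unit_singleton (w : E) :
    (𝕜 ∙ e)ᗮ.starProjection w = w - ⟪e, w⟫_𝕜 • e := by
  rw [starProjection_orthogonal_val, starProjection_unit_singleton 𝕜 he]

theorem inner_starProjection_orthogonal_unit_singleton (x y : E) :
    ⟪(𝕜 ∙ e)ᗮ.starProjection x, (𝕜 ∙ e)ᗮ.starProjection y⟫_𝕜 =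
      ⟪x, y⟫_𝕜 - ⟪x, e⟫_𝕜 * ⟪e, y⟫_𝕜 := by
  simp only [starProjection_orthogonal_unit_singleton he, inner_sub_left, inner_sub_right,
    inner_smul_left, inner_smul_right, inner_self_eq_one_of_norm_eq_one he, inner_conj_symm]
  ring

theorem re_inner_smul_sub_sub_smul_s13 (z : E) (γ Γ : 𝕜) :
    re ⟪Γ • e - z, z - γ • e⟫_𝕜 =
      re ⟪Γ - ⟪e, z⟫_𝕜, ⟪e, z⟫_𝕜 - γ⟫_𝕜 - ‖(𝕜 ∙ e)ᗮ.starProjection z‖ ^ 2 := by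
  have key : ⟪Γ • e - z, z - γ • e⟫_𝕜 = ⟪Γ - ⟪e, z⟫_𝕜, ⟪e, z⟫_𝕜 - γ⟫_𝕜 -
      ⟪z - ⟪e, z⟫_𝕜 • e, z - ⟪e, z⟫_𝕜 • e⟫_𝕜 := by
    simp only [inner_apply, inner_sub_left, inner_sub_right, inner_smul_left, inner_smul_right,
      inner_self_eq_one_of_norm_eq_one he, ← inner_conj_symm e z, conj_conj, map_sub]
    ring
  rw [key, map_sub, starProjection_orthogonal_unit_singleton he,
    ← inner_self_eq_norm_sq (𝕜 := 𝕜)]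

end

/-- **A companion of the Grüss inequality** (Theorem 3). -/
theorem gruss_convex_companion {𝕜 H : Type*} [RCLike 𝕜] [NormedAddCommGroup H]
    [InnerProductSpace 𝕜 H] (γ Γ : 𝕜) (e x y : H) (he : ‖e‖ = 1)
    (l : ℝ) (hl : l ∈ Set.Ioo (0 : ℝ) 1)
    (h : 0 ≤ RCLike.re (inner 𝕜 (Γ • e - ((l : 𝕜) • x + ((1 - l : ℝ) : 𝕜) • y))
      (((l : 𝕜) • x + ((1 - l : ℝ) : 𝕜) • y) - γ • e) : 𝕜)) :
    RCLike.re ((inner 𝕜 x y : 𝕜) - (inner 𝕜 x e : 𝕜) * (inner 𝕜 e y : 𝕜)) ≤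
      (1 / 16 : ℝ) * (1 / (l * (1 - l))) * ‖Γ - γ‖ ^ 2 := by
  set z : H := (l : 𝕜) • x + ((1 - l : ℝ) : 𝕜) • y
  set P := (𝕜 ∙ e)ᗮ.starProjection
  have hPz : 4 * ‖P z‖ ^ 2 ≤ ‖Γ - γ‖ ^ 2 := by
    have := four_mul_re_inner_le_norm_add_sq (𝕜 := 𝕜) (Γ - ⟪e, z⟫_𝕜) (⟪e, z⟫_𝕜 - γ)
    rw [sub_add_sub_cancel] at this
    linarith [re_inner_smul_sub_sub_smul_s13 he z γ Γ, h]
  have hconv : 4 * (l * (1 - l)) * re ⟪P x, P y⟫_𝕜 ≤ ‖P z‖ ^ 2 := by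
    rw [map_add, map_smul, map_smul]
    exact four_mul_mul_re_inner_le_norm_add_sq l (1 - l) (P x) (P y)
  have hl' : 0 < l * (1 - l) := mul_pos hl.1 (sub_pos.2 hl.2)
  rw [← inner_starProjection_orthogonal_unit_singleton he]
  field_simp
  rw [le_div_iff₀ hl']
  linarith
end

section
/- Let H be an inner product space over 𝕜 (𝕜 = ℝ or ℂ), γ, Γ ∈ 𝕜, e, x, y ∈ H with ‖e‖ = 1, and λ ∈ (0,1). If both Re⟨Γe − (λx + (1−λ)y), (λx + (1−λ)y) − γe⟩ ≥ 0 and Re⟨Γe − (λx − (1−λ)y), (λx − (1−λ)y) − γe⟩ ≥ 0, then |Re[⟨x,y⟩ − ⟨x,e⟩⟨e,y⟩]| ≤ (1/16)·(1/(λ(1−λ)))·|Γ − γ|². -/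
/-!
Write `D z = ‖z‖² - |⟪e, z⟫|²` (`besselDefect`) for the squared distance from `z` to the line spanned by `e`.
Completing the square around the midpoint `(Γ + γ) / 2` shows that
`0 ≤ re ⟪Γ e - z, z - γ e⟫` forces `0 ≤ D z ≤ |Γ - γ|² / 4`. Since `D` is a quadratic form,
polarization gives `D (a + b) - D (a - b) = 4 re (⟪a, b⟫ - ⟪a, e⟫⟪e, b⟫)`; with
`a = λ x`, `b = (1 - λ) y` the left side is a difference of two numbers in `[0, |Γ - γ|² / 4]`.
-/

open RCLike ComplexConjugate

section
variable (𝕜 : Type*) {E : Type*} [RCLike 𝕜] [NormedAddCommGroup E] [InnerProductSpace 𝕜 E]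

local notation "⟪" x ", " y "⟫" => inner 𝕜 x y

noncomputable def besselDefect (e z : E) : ℝ := ‖z‖ ^ 2 - ‖⟪e, z⟫‖ ^ 2

variable {𝕜}

theorem re_inner_sub_add (d p : E) : re ⟪d - p, d + p⟫ = ‖d‖ ^ 2 - ‖p‖ ^ 2 := by
  rw [inner_sub_left, inner_add_right, inner_add_right, map_sub, map_add, map_add,
    inner_re_symm p d, inner_self_eq_norm_sq, inner_self_eq_norm_sq]
  ring

theorem besselDefect_nonneg {e : E} (he : ‖e‖ = 1) (z : E) : 0 ≤ besselDefect 𝕜 e z := by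
  have := norm_inner_le_norm (𝕜 := 𝕜) e z
  rw [he, one_mul] at this
  exact sub_nonneg.2 (pow_le_pow_left₀ (norm_nonneg _) this 2)

theorem besselDefect_le_norm_sub_smul_sq {e : E} (he : ‖e‖ = 1) (z : E) (c : 𝕜) :
    besselDefect 𝕜 e z ≤ ‖z - c • e‖ ^ 2 := by
  have hz : ‖z - c • e‖ ^ 2 = ‖z‖ ^ 2 - 2 * re (conj ⟪e, z⟫ * c) + ‖c‖ ^ 2 := by
    rw [norm_sub_sq (𝕜 := 𝕜), inner_smul_right, norm_smul, he, mul_one, ← inner_conj_symm,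
      mul_comm c]
  have hc : ‖⟪e, z⟫ - c‖ ^ 2 = ‖⟪e, z⟫‖ ^ 2 - 2 * re (conj ⟪e, z⟫ * c) + ‖c‖ ^ 2 := by
    rw [@norm_sub_sq 𝕜 𝕜, RCLike.inner_apply']
  unfold besselDefect
  nlinarith [sq_nonneg ‖⟪e, z⟫ - c‖]

theorem besselDefect_le_of_re_inner_nonneg {e : E} (he : ‖e‖ = 1) (γ Γ : 𝕜) {z : E}
    (h : 0 ≤ re ⟪Γ • e - z, z - γ • e⟫) :
    besselDefect 𝕜 e z ≤ ‖Γ - γ‖ ^ 2 / 4 := by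
  have hsplit : re ⟪Γ • e - z, z - γ • e⟫
      = ‖Γ - γ‖ ^ 2 / 4 - ‖z - ((Γ + γ) / 2) • e‖ ^ 2 := by
    have := re_inner_sub_add (𝕜 := 𝕜) (((Γ - γ) / 2) • e) (z - ((Γ + γ) / 2) • e)
    rw [norm_smul, he, mul_one, norm_div, RCLike.norm_two] at this
    convert this using 3 <;> first | module | ring
  linarith [besselDefect_le_norm_sub_smul_sq he z ((Γ + γ) / 2)]

theorem besselDefect_add_sub_besselDefect_sub (e a b : E) :
    besselDefect 𝕜 e (a + b) - besselDefect 𝕜 e (a - b) = 4 * re (⟪a, b⟫ - ⟪a, e⟫ * ⟪e, b⟫) := by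
  rw [besselDefect, besselDefect, inner_add_right, inner_sub_right, norm_add_sq (𝕜 := 𝕜),
    norm_sub_sq (𝕜 := 𝕜), @norm_add_sq 𝕜 𝕜, @norm_sub_sq 𝕜 𝕜, RCLike.inner_apply',
    inner_conj_symm, map_sub]
  ring

theorem re_inner_ofReal_smul_sub_inner_mul_inner_ofReal_smul (e x y : E) (s t : ℝ) :
    re (⟪(s : 𝕜) • x, (t : 𝕜) • y⟫ - ⟪(s : 𝕜) • x, e⟫ * ⟪e, (t : 𝕜) • y⟫)
      = s * t * re (⟪x, y⟫ - ⟪x, e⟫ * ⟪e, y⟫) := by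
  simp only [inner_smul_left, inner_smul_right, conj_ofReal]
  rw [← re_ofReal_mul, ofReal_mul]
  ring_nf

end

/-- **A companion of the Grüss inequality with both signs** (Corollary 4). -/
theorem gruss_convex_companion_abs {𝕜 H : Type*} [RCLike 𝕜] [NormedAddCommGroup H]
    [InnerProductSpace 𝕜 H] (γ Γ : 𝕜) (e x y : H) (he : ‖e‖ = 1)
    (l : ℝ) (hl : l ∈ Set.Ioo (0 : ℝ) 1)
    (hplus : 0 ≤ RCLike.re (inner 𝕜 (Γ • e - ((l : 𝕜) • x + ((1 - l : ℝ) : 𝕜) • y))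
      (((l : 𝕜) • x + ((1 - l : ℝ) : 𝕜) • y) - γ • e) : 𝕜))
    (hminus : 0 ≤ RCLike.re (inner 𝕜 (Γ • e - ((l : 𝕜) • x - ((1 - l : ℝ) : 𝕜) • y))
      (((l : 𝕜) • x - ((1 - l : ℝ) : 𝕜) • y) - γ • e) : 𝕜)) :
    |RCLike.re ((inner 𝕜 x y : 𝕜) - (inner 𝕜 x e : 𝕜) * (inner 𝕜 e y : 𝕜))| ≤
      (1 / 16 : ℝ) * (1 / (l * (1 - l))) * ‖Γ - γ‖ ^ 2 := by
  set u := (l : 𝕜) • x + ((1 - l : ℝ) : 𝕜) • y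
  set v := (l : 𝕜) • x - ((1 - l : ℝ) : 𝕜) • y
  have hs : 0 < 4 * (l * (1 - l)) := mul_pos four_pos (mul_pos hl.1 (sub_pos.2 hl.2))
  have hdiff : besselDefect 𝕜 e u - besselDefect 𝕜 e v
      = 4 * (l * (1 - l)) * re (inner 𝕜 x y - inner 𝕜 x e * inner 𝕜 e y) := by
    rw [besselDefect_add_sub_besselDefect_sub,
      re_inner_ofReal_smul_sub_inner_mul_inner_ofReal_smul]
    ring
  have hbound : |4 * (l * (1 - l)) * re (inner 𝕜 x y - inner 𝕜 x e * inner 𝕜 e y)|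
      ≤ ‖Γ - γ‖ ^ 2 / 4 := by
    rw [← hdiff]
    exact abs_sub_le_of_nonneg_of_le (besselDefect_nonneg he u)
      (besselDefect_le_of_re_inner_nonneg he γ Γ hplus) (besselDefect_nonneg he v)
      (besselDefect_le_of_re_inner_nonneg he γ Γ hminus)
  rw [abs_mul, abs_of_pos hs] at hbound
  rw [show (1 / 16 : ℝ) * (1 / (l * (1 - l))) * ‖Γ - γ‖ ^ 2
      = ‖Γ - γ‖ ^ 2 / 4 / (4 * (l * (1 - l))) by field_simp; ring, le_div_iff₀ hs]
  linarith
end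

section
/- Let H be a real inner product space, e, x, y ∈ H with ‖e‖ = 1, M, m ∈ ℝ with M > m, and λ ∈ (0,1). If both ‖λx + (1−λ)y − ((M+m)/2)e‖ ≤ (1/2)(M − m) and ‖λx − (1−λ)y − ((M+m)/2)e‖ ≤ (1/2)(M − m), then |⟨x,y⟩ − ⟨x,e⟩⟨e,y⟩| ≤ (1/16)·(1/(λ(1−λ)))·(M − m)². -/
/-!
Project `x` and `y` onto the orthogonal complement of `e`: the inner product of the projections
is exactly `⟪x, y⟫ - ⟪x, e⟫⟪e, y⟫`, and since `e` is killed by the projection, the two hypotheses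
say that `a = λ Px` and `b = (1 - λ) Py` satisfy `‖a ± b‖ ≤ (M - m) / 2`. The polarization
identity `4⟪a, b⟫ = ‖a + b‖² - ‖a - b‖²` then bounds `|⟪a, b⟫| = λ(1 - λ) |⟪x, y⟫ - ⟪x, e⟫⟪e, y⟫|`.
-/

open Submodule InnerProductSpace

section

variable {E : Type*} [NormedAddCommGroup E] [InnerProductSpace ℝ E]

theorem abs_real_inner_le_of_norm_add_le_of_norm_sub_le {a b : E} {r : ℝ}
    (hadd : ‖a + b‖ ≤ r) (hsub : ‖a - b‖ ≤ r) : |⟪a, b⟫_ℝ| ≤ r ^ 2 / 4 := by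
  have polarization : 4 * ⟪a, b⟫_ℝ = ‖a + b‖ ^ 2 - ‖a - b‖ ^ 2 := by
    rw [norm_add_sq_real, norm_sub_sq_real]; ring
  have hadd_sq : ‖a + b‖ ^ 2 ≤ r ^ 2 := pow_le_pow_left₀ (norm_nonneg _) hadd 2
  have hsub_sq : ‖a - b‖ ^ 2 ≤ r ^ 2 := pow_le_pow_left₀ (norm_nonneg _) hsub 2
  rw [abs_le]
  constructor <;> nlinarith [sq_nonneg ‖a + b‖, sq_nonneg ‖a - b‖]

theorem starProjection_orthogonal_singleton_apply {e : E} (he : ‖e‖ = 1) (x : E) :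
    (ℝ ∙ e)ᗮ.starProjection x = x - ⟪e, x⟫_ℝ • e := by
  rw [starProjection_orthogonal_val, starProjection_unit_singleton ℝ he]

theorem real_inner_starProjection_orthogonal_singleton {e : E} (he : ‖e‖ = 1) (x y : E) :
    ⟪(ℝ ∙ e)ᗮ.starProjection x, (ℝ ∙ e)ᗮ.starProjection y⟫_ℝ = ⟪x, y⟫_ℝ - ⟪x, e⟫_ℝ * ⟪e, y⟫_ℝ := by
  have hee : ⟪e, e⟫_ℝ = 1 := by rw [real_inner_self_eq_norm_sq, he, one_pow]
  simp only [starProjection_orthogonal_singleton_apply he, inner_sub_left, inner_sub_right,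
    real_inner_smul_left, real_inner_smul_right, hee]
  rw [real_inner_comm x e]
  ring

theorem norm_starProjection_orthogonal_singleton_le (e w : E) (c : ℝ) :
    ‖(ℝ ∙ e)ᗮ.starProjection w‖ ≤ ‖w - c • e‖ := by
  have hPe : (ℝ ∙ e)ᗮ.starProjection e = 0 := starProjection_orthogonalComplement_singleton_eq_zero e
  calc ‖(ℝ ∙ e)ᗮ.starProjection w‖ = ‖(ℝ ∙ e)ᗮ.starProjection (w - c • e)‖ := by
        rw [map_sub, map_smul, hPe, smul_zero, sub_zero]
    _ ≤ ‖w - c • e‖ := norm_starProjection_apply_le _ _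

end

theorem gruss_convex_companion_real_general {H : Type*} [NormedAddCommGroup H]
    [InnerProductSpace ℝ H] (e x y : H) (he : ‖e‖ = 1) (M m : ℝ)
    (l : ℝ) (hl : l ∈ Set.Ioo (0 : ℝ) 1)
    (hplus : ‖l • x + (1 - l) • y - ((M + m) / 2) • e‖ ≤ (1 / 2) * (M - m))
    (hminus : ‖l • x - (1 - l) • y - ((M + m) / 2) • e‖ ≤ (1 / 2) * (M - m)) :
    |(inner ℝ x y : ℝ) - (inner ℝ x e : ℝ) * (inner ℝ e y : ℝ)| ≤
      (1 / 16 : ℝ) * (1 / (l * (1 - l))) * (M - m) ^ 2 := by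
  set P := (ℝ ∙ e)ᗮ.starProjection
  have hadd : ‖l • P x + (1 - l) • P y‖ ≤ (1 / 2) * (M - m) := by
    simpa only [map_add, map_smul] using
      (norm_starProjection_orthogonal_singleton_le e _ _).trans hplus
  have hsub : ‖l • P x - (1 - l) • P y‖ ≤ (1 / 2) * (M - m) := by
    simpa only [map_sub, map_smul] using
      (norm_starProjection_orthogonal_singleton_le e _ _).trans hminus
  have hpos : 0 < l * (1 - l) := mul_pos hl.1 (sub_pos.2 hl.2)
  have key := abs_real_inner_le_of_norm_add_le_of_norm_sub_le hadd hsub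
  rw [real_inner_smul_left, real_inner_smul_right,
    real_inner_starProjection_orthogonal_singleton he, ← mul_assoc, abs_mul, abs_of_pos hpos,
    ← le_div_iff₀' hpos] at key
  exact key.trans_eq (by ring)

/-- **A companion of the Grüss inequality in real inner product spaces** (Remark 2). -/
theorem gruss_convex_companion_real {H : Type*} [NormedAddCommGroup H]
    [InnerProductSpace ℝ H] (e x y : H) (he : ‖e‖ = 1) (M m : ℝ) (hMm : m < M)
    (l : ℝ) (hl : l ∈ Set.Ioo (0 : ℝ) 1)
    (hplus : ‖l • x + (1 - l) • y - ((M + m) / 2) • e‖ ≤ (1 / 2) * (M - m))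
    (hminus : ‖l • x - (1 - l) • y - ((M + m) / 2) • e‖ ≤ (1 / 2) * (M - m)) :
    |(inner ℝ x y : ℝ) - (inner ℝ x e : ℝ) * (inner ℝ e y : ℝ)| ≤
      (1 / 16 : ℝ) * (1 / (l * (1 - l))) * (M - m) ^ 2 :=
  gruss_convex_companion_real_general e x y he M m l hl hplus hminus
end

section
/- Let (Ω, Σ, μ) be a measure space with 0 < μ(Ω) < ∞, let f, g : Ω → ℝ be measurable, and let z, Z, t, T be real numbers with 0 < z, 0 < t, such that z ≤ f(s) ≤ Z and t ≤ g(s) ≤ T for μ-a.e. s ∈ Ω. If ∫_Ω f dμ ≠ 0 and ∫_Ω g dμ ≠ 0, then |μ(Ω)·∫_Ω f(s)g(s) dμ / (∫_Ω f dμ · ∫_Ω g dμ) − 1| ≤ (1/4)·(Z − z)(T − t)/√(ztZT). -/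
/-!
After normalising `μ` to the probability measure `μ[|univ]`, the quantity inside the absolute
value is `cov[f, g] / (𝔼 f * 𝔼 g)`. Cauchy–Schwarz gives `cov[f, g]² ≤ Var f * Var g`, and the
Bhatia–Davis inequality `Var f ≤ (Z - 𝔼 f) * (𝔼 f - z)` together with the AM–GM type estimate
`(Z - x) * (x - z) ≤ (Z - z)² / (4 z Z) * x²` bounds each variance by a multiple of `(𝔼 f)²`.
-/

open MeasureTheory ProbabilityTheory

section

variable {Ω : Type*} [MeasurableSpace Ω] {μ : Measure Ω} {f g : Ω → ℝ}

theorem sq_integral_mul_le_integral_sq_mul_integral_sq (hf : MemLp f 2 μ) (hg : MemLp g 2 μ) :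
    (∫ ω, f ω * g ω ∂μ) ^ 2 ≤ (∫ ω, f ω ^ 2 ∂μ) * ∫ ω, g ω ^ 2 ∂μ := by
  have inner_toLp : ∀ {u v : Ω → ℝ} (hu : MemLp u 2 μ) (hv : MemLp v 2 μ),
      inner ℝ (hu.toLp u) (hv.toLp v) = ∫ ω, u ω * v ω ∂μ := fun hu hv => by
    rw [L2.inner_def]
    refine integral_congr_ae ?_
    filter_upwards [hu.coeFn_toLp, hv.coeFn_toLp] with ω hu hv
    simp [hu, hv, mul_comm]
  have := real_inner_mul_inner_self_le (hf.toLp f) (hg.toLp g)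
  simpa only [inner_toLp, ← sq] using this

end

/-- The difference of the two sides, times `4 a b`, is `((a + b) * x - 2 * a * b) ^ 2`. -/
theorem sub_mul_sub_le_sq_div_mul_sq {a b : ℝ} (ha : 0 < a) (hb : 0 < b) (x : ℝ) :
    (b - x) * (x - a) ≤ (b - a) ^ 2 / (4 * a * b) * x ^ 2 := by
  rw [div_mul_eq_mul_div, le_div_iff₀ (by positivity)]
  nlinarith [sq_nonneg ((a + b) * x - 2 * a * b)]

namespace ProbabilityTheory

variable {Ω : Type*} [MeasurableSpace Ω] {μ : Measure Ω} {X Y : Ω → ℝ}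

theorem covariance_sq_le_variance_mul_variance [IsFiniteMeasure μ] (hX : MemLp X 2 μ)
    (hY : MemLp Y 2 μ) : cov[X, Y; μ] ^ 2 ≤ Var[X; μ] * Var[Y; μ] := by
  rw [covariance, variance_eq_integral hX.aemeasurable, variance_eq_integral hY.aemeasurable]
  exact sq_integral_mul_le_integral_sq_mul_integral_sq (hX.sub (memLp_const _))
    (hY.sub (memLp_const _))

theorem variance_le_sq_div_mul_sq_integral [IsProbabilityMeasure μ] {a b : ℝ} (ha : 0 < a)
    (hb : 0 < b) (h : ∀ᵐ ω ∂μ, X ω ∈ Set.Icc a b) (hX : AEMeasurable X μ) :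
    Var[X; μ] ≤ (b - a) ^ 2 / (4 * a * b) * μ[X] ^ 2 :=
  (variance_le_sub_mul_sub h hX).trans (sub_mul_sub_le_sq_div_mul_sq ha hb _)

theorem abs_integral_mul_div_sub_one_le [IsProbabilityMeasure μ] (hX : AEMeasurable X μ)
    (hY : AEMeasurable Y μ) {z Z t T : ℝ} (hz : 0 < z) (ht : 0 < t)
    (hXb : ∀ᵐ ω ∂μ, X ω ∈ Set.Icc z Z) (hYb : ∀ᵐ ω ∂μ, Y ω ∈ Set.Icc t T) :
    |(∫ ω, X ω * Y ω ∂μ) / (μ[X] * μ[Y]) - 1| ≤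
      1 / 4 * ((Z - z) * (T - t) / Real.sqrt (z * t * Z * T)) := by
  have hzZ : z ≤ Z := by obtain ⟨ω, hω⟩ := hXb.exists; exact hω.1.trans hω.2
  have htT : t ≤ T := by obtain ⟨ω, hω⟩ := hYb.exists; exact hω.1.trans hω.2
  have hZ : 0 < Z := hz.trans_le hzZ
  have hT : 0 < T := ht.trans_le htT
  have hX2 := memLp_of_bounded hXb hX.aestronglyMeasurable 2
  have hY2 := memLp_of_bounded hYb hY.aestronglyMeasurable 2
  have hXpos : 0 < μ[X] := hz.trans_le <| by
    simpa using integral_mono_ae (integrable_const z) (hX2.integrable one_le_two)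
      (hXb.mono fun _ h => h.1)
  have hYpos : 0 < μ[Y] := ht.trans_le <| by
    simpa using integral_mono_ae (integrable_const t) (hY2.integrable one_le_two)
      (hYb.mono fun _ h => h.1)
  have hratio : (∫ ω, X ω * Y ω ∂μ) / (μ[X] * μ[Y]) - 1 = cov[X, Y; μ] / (μ[X] * μ[Y]) := by
    rw [covariance_eq_sub hX2 hY2]
    field_simp
    rfl
  have hbound_sq : (1 / 4 * ((Z - z) * (T - t) / Real.sqrt (z * t * Z * T))) ^ 2 =
      (Z - z) ^ 2 / (4 * z * Z) * ((T - t) ^ 2 / (4 * t * T)) := by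
    rw [mul_pow, div_pow ((Z - z) * (T - t)), Real.sq_sqrt (by positivity)]
    field_simp
  have hbound_nonneg : 0 ≤ 1 / 4 * ((Z - z) * (T - t) / Real.sqrt (z * t * Z * T)) := by
    have := mul_nonneg (sub_nonneg.2 hzZ) (sub_nonneg.2 htT)
    positivity
  refine abs_le_of_sq_le_sq ?_ hbound_nonneg
  rw [hratio, div_pow, div_le_iff₀ (by positivity), hbound_sq]
  calc cov[X, Y; μ] ^ 2 ≤ Var[X; μ] * Var[Y; μ] := covariance_sq_le_variance_mul_variance hX2 hY2
    _ ≤ ((Z - z) ^ 2 / (4 * z * Z) * μ[X] ^ 2) * ((T - t) ^ 2 / (4 * t * T) * μ[Y] ^ 2) :=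
        mul_le_mul (variance_le_sq_div_mul_sq_integral hz hZ hXb hX)
          (variance_le_sq_div_mul_sq_integral ht hT hYb hY)
          (variance_nonneg _ _) (by positivity)
    _ = _ := by ring

end ProbabilityTheory

theorem gruss_integral_ratio_general {Ω : Type*} [MeasurableSpace Ω]
    (μ : Measure Ω) (hμ0 : 0 < μ Set.univ) (hμ : μ Set.univ < ⊤)
    (f g : Ω → ℝ) (hf : Measurable f) (hg : Measurable g)
    (z Z t T : ℝ) (hz : 0 < z) (ht : 0 < t)
    (h1 : ∀ᵐ s ∂μ, z ≤ f s ∧ f s ≤ Z)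
    (h2 : ∀ᵐ s ∂μ, t ≤ g s ∧ g s ≤ T) :
    |(μ Set.univ).toReal * (∫ s, f s * g s ∂μ) / ((∫ s, f s ∂μ) * ∫ s, g s ∂μ) - 1| ≤
      (1 / 4 : ℝ) * ((Z - z) * (T - t) / Real.sqrt (z * t * Z * T)) := by
  have : IsProbabilityMeasure μ[|Set.univ] := cond_isProbabilityMeasure_of_finite hμ0.ne' hμ.ne
  have integral_cond_univ (h : Ω → ℝ) :
      ∫ s, h s ∂μ[|Set.univ] = (μ Set.univ).toReal⁻¹ * ∫ s, h s ∂μ := by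
    simp [ProbabilityTheory.cond, integral_smul_measure]
  have key := abs_integral_mul_div_sub_one_le (μ := μ[|Set.univ]) hf.aemeasurable
    hg.aemeasurable hz ht (cond_absolutelyContinuous.ae_le h1)
    (cond_absolutelyContinuous.ae_le h2)
  rw [integral_cond_univ, integral_cond_univ, integral_cond_univ] at key
  convert key using 3
  have hm : (μ Set.univ).toReal ≠ 0 := ENNReal.toReal_ne_zero.2 ⟨hμ0.ne', hμ.ne⟩
  field_simp

/-- **A Grüss type inequality for real functions in ratio form** (Remark 5, (4.7)). -/
theorem gruss_integral_ratio {Ω : Type*} [MeasurableSpace Ω]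
    (μ : Measure Ω) (hμ0 : 0 < μ Set.univ) (hμ : μ Set.univ < ⊤)
    (f g : Ω → ℝ) (hf : Measurable f) (hg : Measurable g)
    (z Z t T : ℝ) (hz : 0 < z) (ht : 0 < t)
    (h1 : ∀ᵐ s ∂μ, z ≤ f s ∧ f s ≤ Z)
    (h2 : ∀ᵐ s ∂μ, t ≤ g s ∧ g s ≤ T)
    (hfI : (∫ s, f s ∂μ) ≠ 0) (hgI : (∫ s, g s ∂μ) ≠ 0) :
    |(μ Set.univ).toReal * (∫ s, f s * g s ∂μ) / ((∫ s, f s ∂μ) * ∫ s, g s ∂μ) - 1| ≤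
      (1 / 4 : ℝ) * ((Z - z) * (T - t) / Real.sqrt (z * t * Z * T)) :=
  gruss_integral_ratio_general μ hμ0 hμ f g hf hg z Z t T hz ht h1 h2
end
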